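/- Let n,k ≥ 2 be integers, G a vertex-minimal graph with no odd cycles of length ≤ 2k-1 and chromatic number > n, and d = max_v |U_{k-1}(v,G)|. Then |V(G)| ≥ (d^{1/(k-1)} / (d^{1/(k-1)} - 1)) · (f(n-2,k) + 1). -/

import Mathlib

/-- `G` contains no odd cycle of length at most `2k-1`. -/
def NoShortOddCycles {V : Type} (G : SimpleGraph V) (k : ℕ) : Prop :=
  ∀ (v : V) (w : G.Walk v v), w.IsCycle → Odd w.length → 2 * k - 1 < w.length

/-- `f n k` : the largest `f` such that every finite graph with at most `f` vertices
containing no odd cycle of length at most `2k-1` is properly `n`-colorable. -/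
noncomputable def fOdd (n k : ℕ) : ℕ :=
  sSup {f : ℕ | ∀ (V : Type) (_ : Fintype V) (G : SimpleGraph V),
    NoShortOddCycles G k → Fintype.card V ≤ f → G.Colorable n}
/-- The ball of radius `r` around `v` in `G`. -/
noncomputable def ball {V : Type} [Fintype V] (G : SimpleGraph V) (v : V) (r : ℕ) : Finset V :=
  Finset.univ.filter (fun u => G.dist v u ≤ r)

/-! Peel off balls greedily. Around a vertex `v` of the remaining set `s`, let `B r` be the
vertices of `s` within distance `r` of `v` in `G`. Then `|B 0| = 1` and `|B (k-1)| ≤ d = q^(k-1)`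
with `q = d^(1/(k-1))`, so some `r < k - 1` has `|B (r+1)| ≤ q |B r|`. As `G` has no odd closed
walk of length `≤ 2k-1`, the parity of the distance to `v` 2-colours `B r`, and `B r` has no
neighbour in `s \ B (r+1)`. Recursing on `s \ B (r+1)` yields `X` with `|V| ≤ q |X|` and `G[X]`
bipartite. Then `G - X` still has no short odd cycle and is not `(n-2)`-colourable, so
`|V| - |X| ≥ f(n-2,k) + 1`, which rearranges to the bound. -/

open Finset

theorem exists_lt_mul_le_of_le_pow {a : ℕ → ℝ} {q : ℝ} {K : ℕ} (hK : 0 < K) (hq : 0 ≤ q)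
    (h0 : 1 ≤ a 0) (haK : a K ≤ q ^ K) : ∃ r < K, a (r + 1) ≤ q * a r := by
  by_contra! hgrow
  have : ∀ j, 1 ≤ j → j ≤ K → q ^ j < a j := by
    intro j hj
    induction j, hj using Nat.le_induction with
    | base => intro hK1; simpa using (mul_le_mul_of_nonneg_left h0 hq).trans_lt (hgrow 0 hK1)
    | succ j hj ih =>
      intro hjK
      calc q ^ (j + 1) = q * q ^ j := pow_succ' q j
        _ ≤ q * a j := mul_le_mul_of_nonneg_left (ih (by omega)).le hq
        _ < a (j + 1) := hgrow j (by omega)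
  exact (this K hK le_rfl).not_ge haK

namespace SimpleGraph

variable {V : Type*} {G : SimpleGraph V}

namespace Walk

theorem exists_closed_subwalk_of_not_isPath {u v : V} (p : G.Walk u v) (hp : ¬p.IsPath) :
    ∃ (x : V) (a : G.Walk u x) (c : G.Walk x x) (b : G.Walk x v),
      0 < c.length ∧ a.length + c.length + b.length = p.length := by
  classical
  induction p with
  | nil => exact absurd .nil hp
  | @cons u y v h q ih =>
    by_cases hq : q.IsPath
    · have hu : u ∈ q.support := by simpa [cons_isPath_iff, hq] using hp
      refine ⟨u, .nil, .cons h (q.takeUntil u hu), q.dropUntil u hu, by simp, ?_⟩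
      have := congrArg length (q.take_spec hu)
      simp only [length_append] at this
      simp only [length_nil, length_cons]
      omega
    · obtain ⟨x, a, c, b, hc, hlen⟩ := ih hq
      exact ⟨x, .cons h a, c, b, hc, by simp only [length_cons]; omega⟩

theorem exists_isCycle_odd_length_le {v : V} (w : G.Walk v v) (hw : Odd w.length) :
    ∃ (u : V) (c : G.Walk u u), c.IsCycle ∧ Odd c.length ∧ c.length ≤ w.length := by
  induction hn : w.length using Nat.strong_induction_on generalizing v with
  | _ n ih =>
  subst hn
  cases w with
  | nil => simp at hw
  | @cons _ y _ h p =>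
    by_cases hp : p.IsPath
    · refine ⟨v, .cons h p, ?_, hw, le_rfl⟩
      refine isCycle_iff_isPath_tail_and_le_length.2 ⟨by simpa using hp, ?_⟩
      have : p.length ≠ 0 := fun h0 => by
        cases p with
        | nil => exact h.ne rfl
        | cons _ _ => simp at h0
      simp only [length_cons] at hw ⊢
      obtain ⟨m, hm⟩ := hw
      omega
    · obtain ⟨x, a, c, b, hc, hlen⟩ := p.exists_closed_subwalk_of_not_isPath hp
      have hsplit : c.length + (cons h (a.append b)).length = (cons h p).length := by
        simp only [length_cons, length_append]; omega
      rcases Nat.even_or_odd c.length with hce | hco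
      · have hodd : Odd (cons h (a.append b)).length := by
          rw [← hsplit] at hw; exact (Nat.odd_add'.1 hw).2 hce
        obtain ⟨u, d, hd, hdo, hdl⟩ := ih _ (by omega) _ hodd rfl
        exact ⟨u, d, hd, hdo, by omega⟩
      · obtain ⟨u, d, hd, hdo, hdl⟩ := ih _ (by simp only [length_cons]; omega) c hco rfl
        exact ⟨u, d, hd, hdo, by omega⟩

end Walk

theorem Colorable.induce_union {s t : Set V} {n : ℕ} (hs : (G.induce s).Colorable n)
    (ht : (G.induce t).Colorable n) (hst : ∀ x ∈ s, ∀ y ∈ t, ¬G.Adj x y) :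
    (G.induce (s ∪ t)).Colorable n := by
  classical
  obtain ⟨Cs⟩ := hs
  obtain ⟨Ct⟩ := ht
  refine ⟨Coloring.mk
    (fun x => if hx : x.1 ∈ s then Cs ⟨x, hx⟩ else Ct ⟨x, x.2.resolve_left hx⟩) ?_⟩
  rintro ⟨x, hx⟩ ⟨y, hy⟩ hxy
  simp only [comap_adj, Function.Embedding.subtype_apply] at hxy
  by_cases hxs : x ∈ s <;> by_cases hys : y ∈ s <;> simp only [hxs, hys, dite_true, dite_false]
  · exact Cs.valid (by simpa using hxy)
  · exact absurd hxy (hst x hxs y (hy.resolve_left hys))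
  · exact absurd hxy.symm (hst y hys x (hx.resolve_left hxs))
  · exact Ct.valid (by simpa using hxy)

theorem Colorable.of_induce_of_induce_compl {s : Set V} {a b : ℕ}
    (hs : (G.induce s).Colorable a) (hsc : (G.induce sᶜ).Colorable b) : G.Colorable (a + b) := by
  classical
  obtain ⟨Cs⟩ := hs
  obtain ⟨Cc⟩ := hsc
  let C : G.Coloring (Fin a ⊕ Fin b) := Coloring.mk
    (fun x => if hx : x ∈ s then .inl (Cs ⟨x, hx⟩) else .inr (Cc ⟨x, hx⟩)) (by
      intro x y hxy
      by_cases hxs : x ∈ s <;> by_cases hys : y ∈ s <;>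
        simp only [hxs, hys, dite_true, dite_false, ne_eq, reduceCtorEq, not_false_eq_true,
          Sum.inl.injEq, Sum.inr.injEq]
      · exact Cs.valid (by simpa using hxy)
      · exact Cc.valid (by simpa using hxy))
  simpa using C.colorable

theorem edist_le_add_one_of_adj {v x y : V} {r : ℕ} (hx : G.edist v x ≤ r) (hxy : G.Adj x y) :
    G.edist v y ≤ ↑(r + 1) := by
  calc G.edist v y ≤ G.edist v x + G.edist x y := G.edist_triangle
    _ ≤ r + 1 := add_le_add hx (edist_eq_one_iff_adj.2 hxy).le
    _ = ↑(r + 1) := by push_cast; rfl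

theorem colorable_two_induce_of_forall_edist_le {v : V} {r : ℕ} {s : Set V}
    (hs : ∀ u ∈ s, G.edist v u ≤ r)
    (hodd : ∀ w : G.Walk v v, Odd w.length → 2 * r + 1 < w.length) :
    (G.induce s).Colorable 2 := by
  refine ⟨Coloring.mk (fun u => (⟨G.dist v u % 2, Nat.mod_lt _ two_pos⟩ : Fin 2)) ?_⟩
  rintro ⟨x, hx⟩ ⟨y, hy⟩ hxy
  simp only [comap_adj, Function.Embedding.subtype_apply] at hxy
  have reach {u} (hu : u ∈ s) : G.Reachable v u :=
    reachable_of_edist_ne_top (ne_top_of_le_ne_top (by simp) (hs u hu))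
  have hdist {u} (hu : u ∈ s) : G.dist v u ≤ r := by
    have := hs u hu
    rw [← (reach hu).coe_dist_eq_edist] at this
    exact_mod_cast this
  have hne : G.dist v x ≠ G.dist v y := by
    intro heq
    obtain ⟨px, hpx⟩ := (reach hx).exists_walk_length_eq_dist
    obtain ⟨py, hpy⟩ := (reach hy).exists_walk_length_eq_dist
    have hlen : ((px.concat hxy).append py.reverse).length = 2 * G.dist v x + 1 := by
      simp only [Walk.length_append, Walk.length_concat, Walk.length_reverse]; omega
    have := hodd _ (by rw [hlen]; exact odd_two_mul_add_one _)
    have := hdist hx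
    omega
  simp only [ne_eq, Fin.mk.injEq]
  rcases hxy.diff_dist_adj (u := v) with h | h | h <;> omega

theorem exists_colorable_two_induce_card_le_mul [Fintype V] {K : ℕ} (hK : 0 < K) {q : ℝ}
    (hq : 0 ≤ q) (hodd : ∀ (v : V) (w : G.Walk v v), Odd w.length → 2 * K < w.length)
    (hball : ∀ v, (#{u | G.edist v u ≤ K} : ℝ) ≤ q ^ K) (s : Finset V) :
    ∃ X ⊆ s, (#s : ℝ) ≤ q * #X ∧ (G.induce (X : Set V)).Colorable 2 := by
  classical
  induction s using Finset.strongInduction with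
  | H s ih =>
  obtain rfl | ⟨v, hv⟩ := s.eq_empty_or_nonempty
  · exact ⟨∅, subset_rfl, by simp, by rw [coe_empty]; exact Colorable.of_isEmpty 2⟩
  set B : ℕ → Finset V := fun r => {u ∈ s | G.edist v u ≤ r}
  have hvB (r : ℕ) : v ∈ B r := by simp [B, hv]
  obtain ⟨r, hrK, hr⟩ : ∃ r < K, (#(B (r + 1)) : ℝ) ≤ q * #(B r) := by
    refine exists_lt_mul_le_of_le_pow (a := fun r => (#(B r) : ℝ)) hK hq ?_
      ((?_ : (#(B K) : ℝ) ≤ _).trans (hball v))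
    · exact_mod_cast card_pos.2 ⟨v, hvB 0⟩
    · exact_mod_cast card_le_card (filter_subset_filter _ (subset_univ s))
  have hBs : B (r + 1) ⊆ s := filter_subset _ _
  obtain ⟨X, hXs, hX, hXcol⟩ := ih (s \ B (r + 1)) (sdiff_ssubset hBs ⟨v, hvB _⟩)
  have hBX : Disjoint (B r) X := by
    refine Finset.disjoint_left.2 fun u hu huX => (mem_sdiff.1 (hXs huX)).2 ?_
    simp only [B, mem_filter] at hu ⊢
    exact ⟨hu.1, hu.2.trans (by norm_cast; omega)⟩
  refine ⟨B r ∪ X, union_subset (filter_subset _ _) (hXs.trans sdiff_subset), ?_, ?_⟩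
  · calc (#s : ℝ) = #(B (r + 1)) + #(s \ B (r + 1)) := by
          rw [← Nat.cast_add, add_comm, card_sdiff_add_card_eq_card hBs]
      _ ≤ q * #(B r) + q * #X := add_le_add hr hX
      _ = q * #(B r ∪ X) := by rw [card_union_of_disjoint hBX]; push_cast; ring
  · rw [coe_union]
    refine Colorable.induce_union (colorable_two_induce_of_forall_edist_le (v := v) (r := r)
      (fun u hu => (mem_filter.1 hu).2) fun w hw => by have := hodd v w hw; omega) hXcol ?_
    intro x hx y hy hxy
    have hyB : y ∈ B (r + 1) :=
      mem_filter.2 ⟨(mem_sdiff.1 (hXs hy)).1, edist_le_add_one_of_adj (mem_filter.1 hx).2 hxy⟩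
    exact (mem_sdiff.1 (hXs hy)).2 hyB

end SimpleGraph

theorem NoShortOddCycles.of_embedding {V W : Type} {G : SimpleGraph V} {H : SimpleGraph W} {k : ℕ}
    (hG : NoShortOddCycles G k) (f : H ↪g G) : NoShortOddCycles H k := fun v w hw hodd => by
  simpa using hG _ (w.map f.toHom)
    ((SimpleGraph.Walk.isCycle_map_iff_of_injective f.injective).2 hw) (by simpa using hodd)

theorem NoShortOddCycles.lt_length_of_odd {V : Type} {G : SimpleGraph V} {k : ℕ}
    (hG : NoShortOddCycles G k) {v : V} (w : G.Walk v v) (hw : Odd w.length) :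
    2 * k - 1 < w.length := by
  obtain ⟨u, c, hc, hco, hcw⟩ := w.exists_isCycle_odd_length_le hw
  exact (hG u c hc hco).trans_le hcw

theorem colorable_of_card_le_fOdd {p k : ℕ} {W : Type} [Fintype W] {H : SimpleGraph W}
    (hH : NoShortOddCycles H k) (hW : Fintype.card W ≤ fOdd p k) : H.Colorable p := by
  set S : Set ℕ := {f | ∀ (V : Type) (_ : Fintype V) (G : SimpleGraph V),
    NoShortOddCycles G k → Fintype.card V ≤ f → G.Colorable p}
  by_cases hS : BddAbove S
  · have h0 : 0 ∈ S := fun V _ G _ hV =>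
      have : IsEmpty V := Fintype.card_eq_zero_iff.1 (Nat.le_zero.1 hV)
      SimpleGraph.Colorable.of_isEmpty p
    exact Nat.sSup_mem ⟨0, h0⟩ hS W _ H hH hW
  · obtain ⟨f, hf, hWf⟩ := not_bddAbove_iff.1 hS (Fintype.card W)
    exact hf W _ H hH hWf.le

theorem card_filter_edist_le_le_card_ball {V : Type} [Fintype V] (G : SimpleGraph V) (v : V)
    (r : ℕ) : #{u | G.edist v u ≤ r} ≤ #(ball G v r) := by
  refine card_le_card fun u hu => mem_filter.2 ⟨mem_univ u, ?_⟩
  exact ENat.toNat_le_of_le_natCast (mem_filter.1 hu).2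

theorem div_sub_one_mul_le_of_le_mul {q N x m : ℝ} (hq : 1 < q) (hN : N ≤ q * x)
    (hm : x + m ≤ N) : q / (q - 1) * m ≤ N := by
  rw [div_mul_eq_mul_div, div_le_iff₀ (by linarith)]
  nlinarith [mul_le_mul_of_nonneg_left hm (by linarith : (0 : ℝ) ≤ q)]

theorem stmt_7_general {V : Type} [Fintype V] (G : SimpleGraph V) (n k : ℕ)
    (hn : 2 ≤ n) (hk : 2 ≤ k)
    (hG : NoShortOddCycles G k) (hchr : ¬ G.Colorable n)
    (d : ℕ) (hd : d = Finset.univ.sup (fun v : V => (ball G v (k - 1)).card)) :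
    (d : ℝ) ^ ((1 : ℝ) / (k - 1)) / ((d : ℝ) ^ ((1 : ℝ) / (k - 1)) - 1) *
      ((fOdd (n - 2) k : ℝ) + 1) ≤ (Fintype.card V : ℝ) := by
  classical
  set q : ℝ := (d : ℝ) ^ ((1 : ℝ) / (k - 1)) with hq_def
  have hq0 : 0 ≤ q := by positivity
  rcases le_or_gt q 1 with hq1 | hq1
  · -- For `q ≤ 1` the factor `q / (q - 1)` is `≤ 0` (at `q = 1` because `x / 0 = 0`).
    exact (mul_nonpos_of_nonpos_of_nonneg (div_nonpos_of_nonneg_of_nonpos hq0 (by linarith))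
      (by positivity)).trans (Nat.cast_nonneg _)
  have hqK : q ^ (k - 1) = d := by
    rw [hq_def, one_div, ← Nat.cast_pred (by omega),
      Real.rpow_inv_natCast_pow d.cast_nonneg (by omega)]
  obtain ⟨X, -, hX, hXcol⟩ := G.exists_colorable_two_induce_card_le_mul (K := k - 1) (by omega)
    hq0 (fun v w hw => by have := hG.lt_length_of_odd w hw; omega)
    (fun v => by
      rw [hqK, hd]
      exact_mod_cast (card_filter_edist_le_le_card_ball G v _).trans
        (le_sup (f := fun v => #(ball G v (k - 1))) (mem_univ v)))
    univ
  have hXc : fOdd (n - 2) k < Fintype.card V - #X := by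
    by_contra! h
    refine hchr (Nat.add_sub_cancel' hn ▸ hXcol.of_induce_of_induce_compl
      (colorable_of_card_le_fOdd (hG.of_embedding (SimpleGraph.Embedding.induce _)) ?_))
    rw [Fintype.card_compl_set]; simpa using h
  have hcard : #X + (fOdd (n - 2) k + 1) ≤ Fintype.card V := by
    have := card_le_univ X; omega
  exact div_sub_one_mul_le_of_le_mul hq1 (by simpa using hX) (by exact_mod_cast hcard)

theorem stmt_7 {V : Type} [Fintype V] (G : SimpleGraph V) (n k : ℕ)
    (hn : 2 ≤ n) (hk : 2 ≤ k)
    (hG : NoShortOddCycles G k) (hchr : ¬ G.Colorable n)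
    (hmin : ∀ (W : Type) (_ : Fintype W) (H : SimpleGraph W),
      NoShortOddCycles H k → Fintype.card W < Fintype.card V → H.Colorable n)
    (d : ℕ) (hd : d = Finset.univ.sup (fun v : V => (ball G v (k - 1)).card)) :
    (d : ℝ) ^ ((1 : ℝ) / (k - 1)) / ((d : ℝ) ^ ((1 : ℝ) / (k - 1)) - 1) *
      ((fOdd (n - 2) k : ℝ) + 1) ≤ (Fintype.card V : ℝ) :=
  stmt_7_general G n k hn hk hG hchr d hd
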